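/- Let x : [0,t_f] → ℝ be twice continuously differentiable, let K, N ≥ 1, and let 0 = t_0 < t_1 < ... < t_K = t_f be knots satisfying t_k − t_{k−1} ≤ C_t/K for all k, where C_t > 0. Let x_M be the composite Bernstein approximant of x with K segments of degree N. Then for all t ∈ [0,t_f], |x_M(t) − x(t)| ≤ A/(K²N), where A = (C_t²/8)·sup_{τ∈[0,t_f]} |x''(τ)|. -/

import Mathlib

/-!
On a segment `[a, b]` the Bernstein operator reproduces affine functions, so its error at `t`
is the Bernstein average of the Taylor remainders `x s - x t - x' t * (s - t)` over the nodes `s`,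
each at most `M (s - t)² / 2` with `M = sup |x''|`. The Bernstein average of `(s - t)²` is the
variance `(t - a) (b - t) / N ≤ (b - a)² / (4 N)`, which gives the error bound
`M (b - a)² / (8 N)`; on each segment of the composite approximant `b - a ≤ C_t / K`.
-/

/-- Bernstein basis polynomial of degree `N`, index `j`, on `[a,b]`:
`b_{j,N}(t) = (N choose j) (t-a)^j (b-t)^(N-j) / (b-a)^N`. -/
noncomputable def bern (a b : ℝ) (N j : ℕ) (t : ℝ) : ℝ :=
  (N.choose j : ℝ) * (t - a) ^ j * (b - t) ^ (N - j) / (b - a) ^ N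

/-- The polynomial piece of the composite Bernstein approximant on a segment `[a,b]`:
`Σ_{j=0}^N x(a + j(b−a)/N) b_{j,N}(t)`. -/
noncomputable def bernApprox (x : ℝ → ℝ) (a b : ℝ) (N : ℕ) (t : ℝ) : ℝ :=
  ∑ j ∈ Finset.range (N + 1), x (a + (j : ℝ) * (b - a) / (N : ℝ)) * bern a b N j t

open Set MeasureTheory
open scoped Interval

section Taylor

theorem abs_sub_sub_mul_le_of_abs_deriv_sub_le {f f' : ℝ → ℝ} {t s M : ℝ}
    (hf : ∀ u ∈ [[t, s]], HasDerivWithinAt f (f' u) [[t, s]] u)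
    (hf' : ContinuousOn f' [[t, s]])
    (hlip : ∀ u ∈ [[t, s]], |f' u - f' t| ≤ M * |u - t|) :
    |f s - f t - f' t * (s - t)| ≤ M / 2 * (s - t) ^ 2 := by
  have ftc : ∫ u in t..s, f' u = f s - f t :=
    intervalIntegral.integral_eq_sub_of_hasDeriv_right (fun u hu => (hf u hu).continuousWithinAt)
      (fun u hu => ((hf u (Ioo_subset_Icc_self hu)).hasDerivAt
        (Icc_mem_nhds hu.1 hu.2)).hasDerivWithinAt)
      hf'.intervalIntegrable
  have hrem : f s - f t - f' t * (s - t) = ∫ u in t..s, (f' u - f' t) := by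
    rw [intervalIntegral.integral_sub hf'.intervalIntegrable intervalIntegrable_const, ftc,
      intervalIntegral.integral_const, smul_eq_mul]
    ring
  rw [hrem, ← Real.norm_eq_abs, intervalIntegral.norm_intervalIntegral_eq]
  calc ‖∫ u in Ι t s, (f' u - f' t)‖ ≤ ∫ u in Ι t s, M * |u - t| ^ 1 := by
        refine norm_integral_le_of_norm_le
          (Continuous.integrableOn_uIoc (by fun_prop)) ?_
        filter_upwards [ae_restrict_mem measurableSet_uIoc] with u hu
        simpa using hlip u (uIoc_subset_uIcc hu)
    _ = M / 2 * (s - t) ^ 2 := by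
        rw [integral_const_mul, integral_pow_abs_sub_uIoc, sq_abs]
        ring

theorem abs_sub_sub_derivWithin_mul_le {x : ℝ → ℝ} {p q M : ℝ} (hpq : p < q)
    (hx : ContDiffOn ℝ 2 x (Icc p q))
    (hM : ∀ u ∈ Icc p q, |iteratedDerivWithin 2 x (Icc p q) u| ≤ M)
    {t s : ℝ} (ht : t ∈ Icc p q) (hs : s ∈ Icc p q) :
    |x s - x t - derivWithin x (Icc p q) t * (s - t)| ≤ M / 2 * (s - t) ^ 2 := by
  have hS : UniqueDiffOn ℝ (Icc p q) := uniqueDiffOn_Icc hpq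
  have hsub : [[t, s]] ⊆ Icc p q := uIcc_subset_Icc ht hs
  have hx' : ContDiffOn ℝ 1 (derivWithin x (Icc p q)) (Icc p q) := hx.derivWithin hS le_rfl
  have hx'' : ∀ u ∈ Icc p q, HasDerivWithinAt (derivWithin x (Icc p q))
      (iteratedDerivWithin 2 x (Icc p q) u) (Icc p q) u := by
    intro u hu
    rw [iteratedDerivWithin_succ', iteratedDerivWithin_one]
    exact (hx'.differentiableOn one_ne_zero u hu).hasDerivWithinAt
  refine abs_sub_sub_mul_le_of_abs_deriv_sub_le
    (fun u hu => ((hx.differentiableOn two_ne_zero u (hsub hu)).hasDerivWithinAt).mono hsub)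
    (hx'.continuousOn.mono hsub) fun u hu => ?_
  simpa only [Real.norm_eq_abs] using (convex_Icc p q).norm_image_sub_le_of_norm_hasDerivWithin_le
    hx'' (fun v hv => by simpa only [Real.norm_eq_abs] using hM v hv) ht (hsub hu)

end Taylor

section Bernstein

open Finset Polynomial

noncomputable def bernNode (a b : ℝ) (N j : ℕ) : ℝ := a + j * (b - a) / N

variable {a b : ℝ} {N : ℕ} (t : ℝ)

theorem bern_eq_eval_bernsteinPolynomial (hab : a < b) {j : ℕ} (hj : j ≤ N) :
    bern a b N j t = (bernsteinPolynomial ℝ N j).eval ((t - a) / (b - a)) := by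
  have hba : b - a ≠ 0 := sub_ne_zero.2 hab.ne'
  have hcompl : 1 - (t - a) / (b - a) = (b - t) / (b - a) := by field_simp; ring
  have hsplit : (b - a) ^ N = (b - a) ^ j * (b - a) ^ (N - j) := by
    rw [← pow_add, Nat.add_sub_cancel' hj]
  simp only [bernsteinPolynomial, eval_mul, eval_pow, eval_natCast, eval_X, eval_sub, eval_one,
    hcompl, div_pow]
  rw [bern, hsplit]
  field_simp

theorem bern_nonneg {j : ℕ} {t : ℝ} (ht : t ∈ Set.Icc a b) : 0 ≤ bern a b N j t := by
  have hab : 0 ≤ b - a := sub_nonneg.2 (ht.1.trans ht.2)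
  have hta : 0 ≤ t - a := sub_nonneg.2 ht.1
  have hbt : 0 ≤ b - t := sub_nonneg.2 ht.2
  unfold bern
  positivity

theorem bernNode_mem_Icc (hab : a ≤ b) {j : ℕ} (hj : j ≤ N) : bernNode a b N j ∈ Set.Icc a b := by
  rcases N.eq_zero_or_pos with rfl | hN
  · simp [bernNode, hab]
  have hjN : (j : ℝ) / N ≤ 1 := div_le_one_of_le₀ (by exact_mod_cast hj) (Nat.cast_nonneg N)
  have hnode : bernNode a b N j = a + (j : ℝ) / N * (b - a) := by unfold bernNode; ring
  rw [hnode]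
  constructor <;> nlinarith [sub_nonneg.2 hab, (by positivity : (0 : ℝ) ≤ j / N)]

theorem bernNode_sub (hab : a < b) (hN : N ≠ 0) (j : ℕ) :
    bernNode a b N j - t = (b - a) / N * (j - N * ((t - a) / (b - a))) := by
  have hba : b - a ≠ 0 := sub_ne_zero.2 hab.ne'
  unfold bernNode
  field_simp
  ring

theorem sum_bern (hab : a < b) : ∑ j ∈ range (N + 1), bern a b N j t = 1 := by
  have h := congrArg (eval ((t - a) / (b - a))) (bernsteinPolynomial.sum ℝ N)
  rw [eval_finsetSum, eval_one] at h
  rw [← h]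
  exact sum_congr rfl fun j hj =>
    bern_eq_eval_bernsteinPolynomial t hab (Nat.lt_succ_iff.mp (mem_range.mp hj))

theorem sum_bernNode_sub_mul_bern (hab : a < b) (hN : N ≠ 0) :
    ∑ j ∈ range (N + 1), (bernNode a b N j - t) * bern a b N j t = 0 := by
  set s := (t - a) / (b - a)
  have h := congrArg (eval s) (bernsteinPolynomial.sum_smul ℝ N)
  simp only [eval_finsetSum, eval_mul, eval_natCast, eval_X, nsmul_eq_mul] at h
  have h1 := sum_bern t hab (N := N)
  calc ∑ j ∈ range (N + 1), (bernNode a b N j - t) * bern a b N j t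
      = (b - a) / N * (∑ j ∈ range (N + 1), (j : ℝ) * (bernsteinPolynomial ℝ N j).eval s
          - N * s * ∑ j ∈ range (N + 1), bern a b N j t) := by
        rw [Finset.mul_sum _ _ ((N : ℝ) * s), ← sum_sub_distrib, Finset.mul_sum]
        refine sum_congr rfl fun j hj => ?_
        rw [bernNode_sub t hab hN, bern_eq_eval_bernsteinPolynomial t hab
          (Nat.lt_succ_iff.mp (mem_range.mp hj))]
        ring
    _ = 0 := by rw [h, h1]; ring

theorem sum_bernNode_sub_sq_mul_bern (hab : a < b) (hN : N ≠ 0) :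
    ∑ j ∈ range (N + 1), (bernNode a b N j - t) ^ 2 * bern a b N j t = (t - a) * (b - t) / N := by
  set s := (t - a) / (b - a)
  have h := congrArg (eval s) (bernsteinPolynomial.variance ℝ N)
  simp only [eval_finsetSum, eval_mul, eval_pow, eval_sub, eval_X, eval_natCast,
    eval_one, nsmul_eq_mul] at h
  have hba : b - a ≠ 0 := sub_ne_zero.2 hab.ne'
  calc ∑ j ∈ range (N + 1), (bernNode a b N j - t) ^ 2 * bern a b N j t
      = ((b - a) / N) ^ 2 * ∑ j ∈ range (N + 1),
          (N * s - j) ^ 2 * (bernsteinPolynomial ℝ N j).eval s := by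
        rw [mul_sum]
        refine sum_congr rfl fun j hj => ?_
        rw [bernNode_sub t hab hN, bern_eq_eval_bernsteinPolynomial t hab
          (Nat.lt_succ_iff.mp (mem_range.mp hj))]
        ring
    _ = (t - a) * (b - t) / N := by
        rw [h]
        simp only [s]
        field_simp
        ring

end Bernstein

section BernsteinError

open Finset

variable {a b : ℝ} {N : ℕ} {x : ℝ → ℝ} {t : ℝ}

theorem bernApprox_sub_eq_sum (hab : a < b) (hN : N ≠ 0) (d : ℝ) :
    bernApprox x a b N t - x t = ∑ j ∈ range (N + 1),
      (x (bernNode a b N j) - x t - d * (bernNode a b N j - t)) * bern a b N j t := by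
  calc bernApprox x a b N t - x t
      = ∑ j ∈ range (N + 1), x (bernNode a b N j) * bern a b N j t
          - x t * ∑ j ∈ range (N + 1), bern a b N j t
          - d * ∑ j ∈ range (N + 1), (bernNode a b N j - t) * bern a b N j t := by
        rw [sum_bern t hab, sum_bernNode_sub_mul_bern t hab hN, mul_one, mul_zero, sub_zero]
        rfl
    _ = _ := by
        rw [mul_sum, mul_sum, ← sum_sub_distrib, ← sum_sub_distrib]
        exact sum_congr rfl fun j _ => by ring

theorem abs_bernApprox_sub_le (hab : a < b) (hN : N ≠ 0) (ht : t ∈ Set.Icc a b) {d M : ℝ}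
    (hM : 0 ≤ M) (htaylor : ∀ s ∈ Set.Icc a b, |x s - x t - d * (s - t)| ≤ M / 2 * (s - t) ^ 2) :
    |bernApprox x a b N t - x t| ≤ M * (b - a) ^ 2 / (8 * N) := by
  calc |bernApprox x a b N t - x t|
      ≤ ∑ j ∈ range (N + 1), M / 2 * ((bernNode a b N j - t) ^ 2 * bern a b N j t) := by
        rw [bernApprox_sub_eq_sum hab hN d]
        refine (abs_sum_le_sum_abs _ _).trans (sum_le_sum fun j hj => ?_)
        rw [abs_mul, abs_of_nonneg (bern_nonneg ht), ← mul_assoc]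
        exact mul_le_mul_of_nonneg_right (htaylor _ (bernNode_mem_Icc hab.le
          (Nat.lt_succ_iff.mp (mem_range.mp hj)))) (bern_nonneg ht)
    _ = M / 2 * ((t - a) * (b - t) / N) := by rw [← mul_sum, sum_bernNode_sub_sq_mul_bern t hab hN]
    _ ≤ M / 2 * ((b - a) ^ 2 / 4 / N) := by
        gcongr
        nlinarith [sq_nonneg (2 * t - a - b)]
    _ = M * (b - a) ^ 2 / (8 * N) := by ring

end BernsteinError

theorem composite_bernstein_function_bound_general
    (tf Ct : ℝ) (htf : 0 < tf)
    (K N : ℕ) (hN : 1 ≤ N)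
    (T : ℕ → ℝ) (hT0 : T 0 = 0) (hTK : T K = tf)
    (hmono : ∀ k < K, T k < T (k + 1))
    (hsize : ∀ k < K, T (k + 1) - T k ≤ Ct / (K : ℝ))
    (x : ℝ → ℝ) (hx : ContDiffOn ℝ 2 x (Set.Icc 0 tf)) :
    ∀ k < K, ∀ t ∈ Set.Icc (T k) (T (k + 1)),
      |bernApprox x (T k) (T (k + 1)) N t - x t|
        ≤ (Ct ^ 2 / 8 *
            sSup ((fun τ => |iteratedDerivWithin 2 x (Set.Icc 0 tf) τ|) '' Set.Icc 0 tf))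
          / ((K : ℝ) ^ 2 * (N : ℝ)) := by
  intro k hk t ht
  set M := sSup ((fun τ => |iteratedDerivWithin 2 x (Set.Icc 0 tf) τ|) '' Set.Icc 0 tf)
  have hbdd : BddAbove ((fun τ => |iteratedDerivWithin 2 x (Set.Icc 0 tf) τ|) '' Set.Icc 0 tf) :=
    isCompact_Icc.bddAbove_image
      (hx.continuousOn_iteratedDerivWithin le_rfl (uniqueDiffOn_Icc htf)).abs
  have hM : ∀ u ∈ Set.Icc 0 tf, |iteratedDerivWithin 2 x (Set.Icc 0 tf) u| ≤ M :=
    fun u hu => le_csSup hbdd ⟨u, hu, rfl⟩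
  have hM0 : 0 ≤ M := (abs_nonneg _).trans (hM 0 ⟨le_rfl, htf.le⟩)
  have hT : MonotoneOn T (Set.Iic K) := monotoneOn_of_le_succ Set.ordConnected_Iic
    fun i _ _ hi => (hmono i (Order.succ_le_iff.mp hi)).le
  have hseg : Set.Icc (T k) (T (k + 1)) ⊆ Set.Icc 0 tf :=
    Set.Icc_subset_Icc (hT0 ▸ hT (Nat.zero_le K) hk.le (Nat.zero_le k))
      (hTK ▸ hT hk (le_refl K) hk)
  calc |bernApprox x (T k) (T (k + 1)) N t - x t|
      ≤ M * (T (k + 1) - T k) ^ 2 / (8 * N) :=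
        abs_bernApprox_sub_le (hmono k hk) (by omega) ht hM0 fun s hs =>
          abs_sub_sub_derivWithin_mul_le htf hx hM (hseg ht) (hseg hs)
    _ ≤ M * (Ct / K) ^ 2 / (8 * N) := by
        gcongr
        · exact sub_nonneg.2 (hmono k hk).le
        · exact hsize k hk
    _ = Ct ^ 2 / 8 * M / ((K : ℝ) ^ 2 * N) := by ring

/-- Lemma 1: for `x ∈ C²([0,t_f])`, knots `0 = T 0 < … < T K = t_f`
with `T (k+1) − T k ≤ C_t/K`, the composite Bernstein approximant `x_M` (given on
each segment `[T k, T (k+1)]` by `bernApprox x (T k) (T (k+1)) N`) satisfies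
`|x_M(t) − x(t)| ≤ A/(K²N)` for all `t ∈ [0,t_f]`, with
`A = (C_t²/8) sup_{τ∈[0,t_f]} |x''(τ)|`. -/
theorem composite_bernstein_function_bound
    (tf Ct : ℝ) (htf : 0 < tf) (hCt : 0 < Ct)
    (K N : ℕ) (hK : 1 ≤ K) (hN : 1 ≤ N)
    (T : ℕ → ℝ) (hT0 : T 0 = 0) (hTK : T K = tf)
    (hmono : ∀ k < K, T k < T (k + 1))
    (hsize : ∀ k < K, T (k + 1) - T k ≤ Ct / (K : ℝ))
    (x : ℝ → ℝ) (hx : ContDiffOn ℝ 2 x (Set.Icc 0 tf)) :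
    ∀ k < K, ∀ t ∈ Set.Icc (T k) (T (k + 1)),
      |bernApprox x (T k) (T (k + 1)) N t - x t|
        ≤ (Ct ^ 2 / 8 *
            sSup ((fun τ => |iteratedDerivWithin 2 x (Set.Icc 0 tf) τ|) '' Set.Icc 0 tf))
          / ((K : ℝ) ^ 2 * (N : ℝ)) :=
  composite_bernstein_function_bound_general tf Ct htf K N hN T hT0 hTK hmono hsize x hx
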